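/- arXiv:2507.04457 — 5 statements merged into one kernel-verified Lean document; each statement's English description precedes it below -/
import Mathlib

section
/- Let ε ≥ 0, δ ∈ [0,1], and let μ and ν be probability measures on a measurable space Ω that are (ε,δ)-indistinguishable. Then for every measurable set R ⊆ Ω, writing α = μ(R) (the type-I error of the test that rejects on R) and β = ν(Rᶜ) (the type-II error), the pair (α,β) lies in the privacy region R(ε,δ): α + e^ε·β ≥ 1 − δ, e^ε·α + β ≥ 1 − δ, α + e^ε·β ≤ e^ε + δ, and e^ε·α + β ≤ e^ε + δ. -/
open MeasureTheory Real

/-- If probability measures μ, ν are (ε,δ)-indistinguishable, then for any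
measurable rejection set R, the type-I error α = μ(R) and type-II error β = ν(Rᶜ) lie in
the privacy region R(ε,δ) of Kairouz et al. -/
theorem privacy_region_of_indistinguishable
    {Ω : Type*} [MeasurableSpace Ω]
    (ε δ : ℝ) (hε : 0 ≤ ε) (hδ0 : 0 ≤ δ) (hδ1 : δ ≤ 1)
    (μ ν : Measure Ω) [IsProbabilityMeasure μ] [IsProbabilityMeasure ν]
    (hindist : ∀ S : Set Ω, MeasurableSet S →
      (μ S).toReal ≤ Real.exp ε * (ν S).toReal + δ ∧
      (ν S).toReal ≤ Real.exp ε * (μ S).toReal + δ)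
    (R : Set Ω) (hR : MeasurableSet R) :
    1 - δ ≤ (μ R).toReal + Real.exp ε * (ν Rᶜ).toReal ∧
    1 - δ ≤ Real.exp ε * (μ R).toReal + (ν Rᶜ).toReal ∧
    (μ R).toReal + Real.exp ε * (ν Rᶜ).toReal ≤ Real.exp ε + δ ∧
    Real.exp ε * (μ R).toReal + (ν Rᶜ).toReal ≤ Real.exp ε + δ := by
  have h1 : (μ Rᶜ).toReal = 1 - (μ R).toReal := by
    rw [prob_compl_eq_one_sub hR]
    rw [ENNReal.toReal_sub_of_le prob_le_one ENNReal.one_ne_top]; simp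
  have h2 : (ν R).toReal = 1 - (ν Rᶜ).toReal := by
    rw [prob_compl_eq_one_sub hR]
    rw [ENNReal.toReal_sub_of_le prob_le_one ENNReal.one_ne_top]; simp
  have hb' : (ν Rᶜ).toReal ≤ 1 := by
    have := prob_le_one (μ := ν) (s := Rᶜ)
    simpa using ENNReal.toReal_mono ENNReal.one_ne_top this
  have hR1 := hindist R hR
  have hR2 := hindist Rᶜ hR.compl
  have he : (1:ℝ) ≤ Real.exp ε := by simpa using Real.exp_le_exp.2 hε
  refine ⟨by nlinarith [hR2.1, h1], by nlinarith [hR1.2, h2],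
    by nlinarith [hR1.1, h2], by nlinarith [hR2.2, h1]⟩
end

section
/- Let ε ≥ 0, δ ∈ [0,1], and let μ and ν be probability measures on a measurable space Ω that are (ε,δ)-indistinguishable. Then for every measurable set R ⊆ Ω, writing α = μ(R) and β = ν(Rᶜ): if β > 0 then e^ε ≥ (1 − α − δ)/β, and if α > 0 then e^ε ≥ (1 − β − δ)/α. Consequently, if additionally 1 − α − δ > 0 (respectively 1 − β − δ > 0), then ε ≥ ln((1 − α − δ)/β) (respectively ε ≥ ln((1 − β − δ)/α)); in particular ε ≥ max{ln((1 − α − δ)/β), ln((1 − β − δ)/α), 0} whenever both logarithms are defined. -/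
open MeasureTheory Real

/-- If probability measures μ, ν are (ε,δ)-indistinguishable, then for any
measurable set R with α = μ(R) and β = ν(Rᶜ): e^ε ≥ (1-α-δ)/β when β > 0,
e^ε ≥ (1-β-δ)/α when α > 0, and consequently ε is lower bounded by the corresponding
logarithms (and by their max with 0) whenever they are defined. -/
theorem eps_lower_bound_of_indistinguishable
    {Ω : Type*} [MeasurableSpace Ω]
    (ε δ : ℝ) (hε : 0 ≤ ε) (hδ0 : 0 ≤ δ) (hδ1 : δ ≤ 1)
    (μ ν : Measure Ω) [IsProbabilityMeasure μ] [IsProbabilityMeasure ν]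
    (hindist : ∀ S : Set Ω, MeasurableSet S →
      (μ S).toReal ≤ Real.exp ε * (ν S).toReal + δ ∧
      (ν S).toReal ≤ Real.exp ε * (μ S).toReal + δ)
    (R : Set Ω) (hR : MeasurableSet R) :
    (0 < (ν Rᶜ).toReal →
      (1 - (μ R).toReal - δ) / (ν Rᶜ).toReal ≤ Real.exp ε) ∧
    (0 < (μ R).toReal →
      (1 - (ν Rᶜ).toReal - δ) / (μ R).toReal ≤ Real.exp ε) ∧
    (0 < (ν Rᶜ).toReal → 0 < 1 - (μ R).toReal - δ →
      Real.log ((1 - (μ R).toReal - δ) / (ν Rᶜ).toReal) ≤ ε) ∧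
    (0 < (μ R).toReal → 0 < 1 - (ν Rᶜ).toReal - δ →
      Real.log ((1 - (ν Rᶜ).toReal - δ) / (μ R).toReal) ≤ ε) ∧
    (0 < (ν Rᶜ).toReal → 0 < (μ R).toReal →
      0 < 1 - (μ R).toReal - δ → 0 < 1 - (ν Rᶜ).toReal - δ →
      max (max (Real.log ((1 - (μ R).toReal - δ) / (ν Rᶜ).toReal))
               (Real.log ((1 - (ν Rᶜ).toReal - δ) / (μ R).toReal))) 0 ≤ ε) := by
  have hμc : (μ Rᶜ).toReal = 1 - (μ R).toReal := by
    have := prob_compl_eq_one_sub (μ := μ) hR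
    rw [this, ENNReal.toReal_sub_of_le (prob_le_one) (by simp)]
    simp
  have hνR : (ν R).toReal = 1 - (ν Rᶜ).toReal := by
    have := prob_compl_eq_one_sub (μ := ν) hR.compl
    rw [compl_compl] at this
    rw [this, ENNReal.toReal_sub_of_le (prob_le_one) (by simp)]
    simp
  have h1 := (hindist Rᶜ hR.compl).1
  have h2 := (hindist R hR).2
  rw [hμc] at h1
  rw [hνR] at h2
  have key1 : 0 < (ν Rᶜ).toReal →
      (1 - (μ R).toReal - δ) / (ν Rᶜ).toReal ≤ Real.exp ε := by
    intro hb
    rw [div_le_iff₀ hb]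
    linarith
  have key2 : 0 < (μ R).toReal →
      (1 - (ν Rᶜ).toReal - δ) / (μ R).toReal ≤ Real.exp ε := by
    intro ha
    rw [div_le_iff₀ ha]
    linarith
  have log1 : 0 < (ν Rᶜ).toReal → 0 < 1 - (μ R).toReal - δ →
      Real.log ((1 - (μ R).toReal - δ) / (ν Rᶜ).toReal) ≤ ε := by
    intro hb hpos
    have := Real.log_le_log (by positivity) (key1 hb)
    rwa [Real.log_exp] at this
  have log2 : 0 < (μ R).toReal → 0 < 1 - (ν Rᶜ).toReal - δ →
      Real.log ((1 - (ν Rᶜ).toReal - δ) / (μ R).toReal) ≤ ε := by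
    intro ha hpos
    have := Real.log_le_log (by positivity) (key2 ha)
    rwa [Real.log_exp] at this
  exact ⟨key1, key2, log1, log2, fun hb ha p1 p2 =>
    max_le (max_le (log1 hb p1) (log2 ha p2)) hε⟩
end

section
/- Let ε ≥ 0 and let μ₀ and μ₁ be probability measures on a measurable space Ω that are (ε,0)-indistinguishable. Let S be uniform on {0,1}, let the observation ω be drawn from μ_S conditionally on S, and let g : Ω → {0,1} be any measurable guessing function. Then the probability that g(ω) = S is at most e^ε/(e^ε + 1). -/
open MeasureTheory Real
open scoped ENNReal

/-- If μ₀, μ₁ are (ε,0)-indistinguishable probability measures, S is a fair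
coin, ω ~ μ_S, and g is any measurable guessing function, then Pr[g(ω) = S] ≤ e^ε/(e^ε+1).
The joint distribution of (S, ω) is (1/2)·(δ_false ⊗ μ₀) + (1/2)·(δ_true ⊗ μ₁). -/
theorem guess_accuracy_le_of_indistinguishable
    {Ω : Type*} [MeasurableSpace Ω]
    (ε : ℝ) (hε : 0 ≤ ε)
    (μ₀ μ₁ : Measure Ω) [IsProbabilityMeasure μ₀] [IsProbabilityMeasure μ₁]
    (hindist : ∀ A : Set Ω, MeasurableSet A →
      μ₀ A ≤ ENNReal.ofReal (Real.exp ε) * μ₁ A ∧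
      μ₁ A ≤ ENNReal.ofReal (Real.exp ε) * μ₀ A)
    (g : Ω → Bool) (hg : Measurable g)
    (P : Measure (Bool × Ω))
    (hP : P = (2 : ℝ≥0∞)⁻¹ • ((Measure.dirac false).prod μ₀)
            + (2 : ℝ≥0∞)⁻¹ • ((Measure.dirac true).prod μ₁)) :
    P {p : Bool × Ω | g p.2 = p.1} ≤ ENNReal.ofReal (Real.exp ε / (Real.exp ε + 1)) := by
  set S : Set (Bool × Ω) := {p : Bool × Ω | g p.2 = p.1} with hS
  set A : Set Ω := g ⁻¹' {true} with hA
  have hAm : MeasurableSet A := hg (measurableSet_singleton true)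
  have hAcm : MeasurableSet Aᶜ := hAm.compl
  have hSm : MeasurableSet S := by
    have : S = (fun p : Bool × Ω => (g p.2, p.1)) ⁻¹' {q : Bool × Bool | q.1 = q.2} := by
      ext p; simp [hS]
    rw [this]
    exact ((hg.comp measurable_snd).prodMk measurable_fst)
      (measurableSet_eq_fun (by measurability) (by measurability))
  have hpre_false : Prod.mk false ⁻¹' S = Aᶜ := by
    ext ω; simp [hS, hA]
  have hpre_true : Prod.mk true ⁻¹' S = A := by
    ext ω; simp [hS, hA]
  have hPS : P S = 2⁻¹ * μ₀ Aᶜ + 2⁻¹ * μ₁ A := by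
    rw [hP]
    simp only [Measure.add_apply, Measure.smul_apply, smul_eq_mul,
      Measure.dirac_prod]
    rw [Measure.map_apply measurable_prodMk_left hSm,
      Measure.map_apply measurable_prodMk_left hSm, hpre_false, hpre_true]
  -- real versions
  set e := Real.exp ε with he
  have he1 : 1 ≤ e := by
    rw [he]; simpa using Real.one_le_exp hε
  have hepos : 0 < e := lt_of_lt_of_le one_pos he1
  set a := (μ₀ A).toReal with ha
  set b := (μ₁ A).toReal with hb
  have hμ₀A : μ₀ A ≠ ⊤ := measure_ne_top _ _
  have hμ₁A : μ₁ A ≠ ⊤ := measure_ne_top _ _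
  have hμ₀le : μ₀ A ≤ 1 := prob_le_one
  have hμ₁le : μ₁ A ≤ 1 := prob_le_one
  have h1 : b ≤ e * a := by
    have := (hindist A hAm).2
    have := ENNReal.toReal_mono (by finiteness) this
    rwa [ENNReal.toReal_mul, ENNReal.toReal_ofReal hepos.le] at this
  have h2 : 1 - a ≤ e * (1 - b) := by
    have := (hindist Aᶜ hAcm).1
    have h := ENNReal.toReal_mono (by finiteness) this
    rw [ENNReal.toReal_mul, ENNReal.toReal_ofReal hepos.le] at h
    rwa [prob_compl_eq_one_sub hAm, prob_compl_eq_one_sub hAm,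
      ENNReal.toReal_sub_of_le hμ₀le (by finiteness),
      ENNReal.toReal_sub_of_le hμ₁le (by finiteness), ENNReal.toReal_one] at h
  have ha0 : 0 ≤ a := ENNReal.toReal_nonneg
  have hb0 : 0 ≤ b := ENNReal.toReal_nonneg
  have ha1 : a ≤ 1 := by
    have := ENNReal.toReal_mono (by finiteness) hμ₀le
    simpa using this
  -- now bound P S
  rw [hPS, prob_compl_eq_one_sub hAm]
  have key : 2⁻¹ * (1 - a) + 2⁻¹ * b ≤ e / (e + 1) := by
    rw [le_div_iff₀ (by positivity)]
    nlinarith [h1, h2]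
  calc 2⁻¹ * (1 - μ₀ A) + 2⁻¹ * μ₁ A
      = ENNReal.ofReal (2⁻¹ * (1 - a) + 2⁻¹ * b) := by
        rw [ENNReal.ofReal_add (by nlinarith) (by positivity),
          ENNReal.ofReal_mul (by norm_num), ENNReal.ofReal_mul (by norm_num),
          ENNReal.ofReal_sub _ ha0, ENNReal.ofReal_one,
          ENNReal.ofReal_toReal hμ₀A, ENNReal.ofReal_toReal hμ₁A]
        norm_num
        rw [show ((1:ℝ)/2) = 2⁻¹ by norm_num, ENNReal.ofReal_inv_of_pos two_pos,
          ENNReal.ofReal_ofNat]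
    _ ≤ ENNReal.ofReal (e / (e + 1)) := ENNReal.ofReal_le_ofReal key
end

section
/- Let (Ω, F, P) be a probability space with a filtration F₀ ⊆ F₁ ⊆ … ⊆ F_r, let p ∈ [0,1], and let X₁, …, X_r be {0,1}-valued random variables such that each X_i is F_i-measurable and E[X_i | F_{i−1}] ≤ p almost surely. Then for every v ∈ ℝ, P[X₁ + … + X_r ≥ v] ≤ P[B ≥ v], where B is a Binomial(r, p) random variable. -/
open MeasureTheory Real
open scoped ENNReal

/-- Upper tail Pr[Binomial(r,p) ≥ v] of the binomial distribution with r trials and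
success probability p. -/
noncomputable def binomialTail (r : ℕ) (p : ℝ) (v : ℝ) : ℝ :=
  ∑ k ∈ Finset.range (r + 1),
    if v ≤ (k : ℝ) then (r.choose k : ℝ) * p ^ k * (1 - p) ^ (r - k) else 0

/-! Induct on `r`, conditioning on `F r`. With `S` the sum of the first `r` variables, the event
`v ≤ S + X r` lies in `{v ≤ S} ∪ ({v - 1 ≤ S < v} ∩ {X r = 1})`; the middle event is
`F r`-measurable, so integrating the conditional bound over it gives probability at most
`p · P[v - 1 ≤ S < v]`. Hence `P[v ≤ S + X r] ≤ (1 - p) P[v ≤ S] + p P[v - 1 ≤ S]`, and the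
binomial tail satisfies this recursion with equality by Pascal's rule. -/

lemma binomialTail_eq_sum_choose_mul (r : ℕ) (p v : ℝ) :
    binomialTail r p v = ∑ k ∈ Finset.range (r + 1),
      (r.choose k : ℝ) * if v ≤ (k : ℝ) then p ^ k * (1 - p) ^ (r - k) else 0 := by
  refine Finset.sum_congr rfl fun k _ => ?_
  split_ifs <;> ring

lemma binomialTail_succ (r : ℕ) (p v : ℝ) :
    binomialTail (r + 1) p v = (1 - p) * binomialTail r p v + p * binomialTail r p (v - 1) := by
  simp only [binomialTail_eq_sum_choose_mul, Finset.mul_sum]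
  rw [Finset.sum_choose_succ_mul (fun k j => if v ≤ (k : ℝ) then p ^ k * (1 - p) ^ j else 0)]
  congr 1 <;> refine Finset.sum_congr rfl fun k hk => ?_
  · rw [Nat.sub_add_comm (Finset.mem_range_succ_iff.mp hk)]
    split_ifs <;> ring
  · have hshift : v ≤ ((k + 1 : ℕ) : ℝ) ↔ v - 1 ≤ k := by
      push_cast
      constructor <;> intro <;> linarith
    simp only [hshift]
    split_ifs <;> ring

section

variable {Ω : Type*} {m m0 : MeasurableSpace Ω} {μ : Measure Ω} [IsFiniteMeasure μ]

lemma measureReal_inter_eq_one_le_of_condExp_le (hm : m ≤ m0) {Y : Ω → ℝ}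
    (hY : ∀ ω, Y ω = 0 ∨ Y ω = 1) (hYmeas : StronglyMeasurable[m0] Y) {p : ℝ}
    (hcond : ∀ᵐ ω ∂μ, μ[Y | m] ω ≤ p) {A : Set Ω} (hA : MeasurableSet[m] A) :
    μ.real (A ∩ {ω | Y ω = 1}) ≤ p * μ.real A := by
  set D := {ω | Y ω = 1}
  have hD : MeasurableSet D := hYmeas.measurable (measurableSet_singleton 1)
  have hY_eq : Y = D.indicator 1 := funext fun ω => by rcases hY ω with h | h <;> simp [D, h]
  have hYint : Integrable Y μ := hY_eq ▸ (integrable_const 1).indicator hD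
  calc μ.real (A ∩ D) = ∫ ω in A, Y ω ∂μ := by
        rw [hY_eq, integral_indicator_one hD, measureReal_restrict_apply hD, Set.inter_comm]
    _ = ∫ ω in A, μ[Y | m] ω ∂μ := (setIntegral_condExp hm hYint hA).symm
    _ ≤ ∫ _ in A, p ∂μ :=
        setIntegral_mono_ae integrable_condExp.integrableOn (integrable_const p).integrableOn hcond
    _ = p * μ.real A := by rw [setIntegral_const, smul_eq_mul, mul_comm]

lemma measureReal_le_add_le_of_condExp_le (hm : m ≤ m0) {S Y : Ω → ℝ}
    (hS : StronglyMeasurable[m] S) (hY : ∀ ω, Y ω = 0 ∨ Y ω = 1)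
    (hYmeas : StronglyMeasurable[m0] Y) {p : ℝ} (hcond : ∀ᵐ ω ∂μ, μ[Y | m] ω ≤ p) (v : ℝ) :
    μ.real {ω | v ≤ S ω + Y ω} ≤
      (1 - p) * μ.real {ω | v ≤ S ω} + p * μ.real {ω | v - 1 ≤ S ω} := by
  set B := {ω | v ≤ S ω}
  set C := {ω | v - 1 ≤ S ω}
  have hB : MeasurableSet[m] B := measurableSet_le measurable_const hS.measurable
  have hC : MeasurableSet[m] C := measurableSet_le measurable_const hS.measurable
  have hBC : B ⊆ C := fun ω (h : v ≤ S ω) => show v - 1 ≤ S ω by linarith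
  have hcover : {ω | v ≤ S ω + Y ω} ⊆ B ∪ ((C \ B) ∩ {ω | Y ω = 1}) := by
    intro ω (h : v ≤ S ω + Y ω)
    by_cases hb : ω ∈ B
    · exact Or.inl hb
    · rcases hY ω with h0 | h1
      · exact absurd (show v ≤ S ω by linarith) hb
      · exact Or.inr ⟨⟨show v - 1 ≤ S ω by linarith, hb⟩, h1⟩
  calc μ.real {ω | v ≤ S ω + Y ω}
      ≤ μ.real B + μ.real ((C \ B) ∩ {ω | Y ω = 1}) :=
        (measureReal_mono hcover).trans (measureReal_union_le _ _)
    _ ≤ μ.real B + p * μ.real (C \ B) := by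
        gcongr
        exact measureReal_inter_eq_one_le_of_condExp_le hm hY hYmeas hcond (hC.diff hB)
    _ = (1 - p) * μ.real B + p * μ.real C := by
        rw [measureReal_sdiff hBC (hm _ hB)]
        ring

end

lemma measureReal_le_sum_le_binomialTail {Ω : Type*} {m0 : MeasurableSpace Ω} {μ : Measure Ω}
    [IsProbabilityMeasure μ] (F : Filtration ℕ m0)
    {p : ℝ} (hp0 : 0 ≤ p) (hp1 : p ≤ 1) (r : ℕ) (X : ℕ → Ω → ℝ)
    (hval : ∀ i ∈ Finset.range r, ∀ ω, X i ω = 0 ∨ X i ω = 1)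
    (hadapted : ∀ i ∈ Finset.range r, StronglyMeasurable[F (i + 1)] (X i))
    (hcond : ∀ i ∈ Finset.range r, ∀ᵐ ω ∂μ, (μ[X i | F i]) ω ≤ p) (v : ℝ) :
    μ.real {ω | v ≤ ∑ i ∈ Finset.range r, X i ω} ≤ binomialTail r p v := by
  induction r generalizing v with
  | zero =>
    by_cases hv : v ≤ 0 <;> simp [binomialTail, hv]
  | succ r ih =>
    have hsub := Finset.range_subset_range.mpr r.le_succ
    have hr := Finset.self_mem_range_succ r
    have hS : StronglyMeasurable[F r] fun ω => ∑ i ∈ Finset.range r, X i ω :=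
      Finset.stronglyMeasurable_fun_sum _ fun i hi =>
        (hadapted i (hsub hi)).mono (F.mono (Finset.mem_range.mp hi))
    have ih_tail (w : ℝ) := ih (fun i hi => hval i (hsub hi)) (fun i hi => hadapted i (hsub hi))
      (fun i hi => hcond i (hsub hi)) w
    simp only [Finset.sum_range_succ]
    calc _ ≤ (1 - p) * μ.real {ω | v ≤ ∑ i ∈ Finset.range r, X i ω}
          + p * μ.real {ω | v - 1 ≤ ∑ i ∈ Finset.range r, X i ω} :=
          measureReal_le_add_le_of_condExp_le (F.le r) hS (hval r hr)
            ((hadapted r hr).mono (F.le _)) (hcond r hr) v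
      _ ≤ (1 - p) * binomialTail r p v + p * binomialTail r p (v - 1) := by
          gcongr
          exacts [ih_tail v, ih_tail (v - 1)]
      _ = binomialTail (r + 1) p v := (binomialTail_succ r p v).symm

/-- If {0,1}-valued random variables X₁,…,X_r are adapted to a filtration
(X i is F(i+1)-measurable, zero-indexed) with conditional success probability
E[X_i | F_{i-1}] ≤ p a.s., then their sum is stochastically dominated by Binomial(r,p):
P[X₁+…+X_r ≥ v] ≤ P[Binomial(r,p) ≥ v]. -/
theorem sum_dominated_by_binomial
    {Ω : Type*} {m0 : MeasurableSpace Ω} (μ : Measure Ω) [IsProbabilityMeasure μ]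
    (r : ℕ) (p : ℝ) (hp0 : 0 ≤ p) (hp1 : p ≤ 1)
    (F : Filtration ℕ m0)
    (X : ℕ → Ω → ℝ)
    (hval : ∀ i ∈ Finset.range r, ∀ ω, X i ω = 0 ∨ X i ω = 1)
    (hadapted : ∀ i ∈ Finset.range r, StronglyMeasurable[F (i + 1)] (X i))
    (hcond : ∀ i ∈ Finset.range r, ∀ᵐ ω ∂μ, (μ[X i | F i]) ω ≤ p)
    (v : ℝ) :
    μ {ω | v ≤ ∑ i ∈ Finset.range r, X i ω} ≤ ENNReal.ofReal (binomialTail r p v) := by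
  rw [← ofReal_measureReal]
  exact ENNReal.ofReal_le_ofReal
    (measureReal_le_sum_le_binomialTail F hp0 hp1 r X hval hadapted hcond v)
end

section
/- Let ε ≥ 0 and m, r ∈ ℕ with r ≤ m. Let M be a mechanism assigning to each s ∈ {−1,+1}^m a probability measure M(s) on Ω, satisfying (ε,0)-DP: for all s, s′ differing in exactly one coordinate and every measurable A, M(s)(A) ≤ e^ε·M(s′)(A). Let S be uniform on {−1,+1}^m, ω ~ M(S), and let Ŝ : Ω → {−1,0,+1}^m be a measurable guessing rule that almost surely makes exactly r nonzero guesses, with W = Σ_{i=1}^m max{0, Ŝ(ω)_i · S_i}. Then for every t > 0, Pr[W ≥ r·e^ε/(e^ε+1) + t] ≤ exp(−2t²/r). -/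
open MeasureTheory Real
open scoped ENNReal

/-- The ±1 sign encoded by a Boolean membership bit (true = +1, false = −1). -/
def signOf (b : Bool) : ℤ := if b then 1 else -1

/-!
For `L ≥ 0` the number of correct guesses satisfies `e^{L W} = ∏ i (1 + (e^L - 1) [Ŝ_i = S_i])`.
Pairing every membership vector `s` with the vector that differs from it in coordinate `i` only,
`(ε,0)`-DP shows that a correct guess at `i` carries at most the fraction
`p = e^ε / (e^ε + 1)` of the weight of a nonzero guess at `i` summed over the pair. So the factors
can be replaced, one coordinate at a time, by `1 + p (e^L - 1) [Ŝ_i ≠ 0]` without decreasing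
`E e^{L W}`. With exactly `r` nonzero guesses this gives `E e^{L W} ≤ (1 - p + p e^L)^r`, the
moment generating function of `Binomial(r, p)`, and Hoeffding's lemma with the Chernoff bound at
`L = 4t/r` finishes the proof.
-/

open Finset

lemma ENNReal.le_div_add_one_mul_add {c x y : ℝ≥0∞} (hc : c ≠ ∞) (h : x ≤ c * y) :
    x ≤ c / (c + 1) * (x + y) := by
  rw [← ENNReal.mul_div_right_comm, ENNReal.le_div_iff_mul_le (by simp) (by simp [hc])]
  calc x * (c + 1) = c * x + x := by ring
    _ ≤ c * x + c * y := by gcongr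
    _ = c * (x + y) := by ring

lemma ENNReal.sum_le_sum_of_involutive {α : Type*} [Fintype α] {σ : α → α}
    (hσ : Function.Involutive σ) {f g : α → ℝ≥0∞} (h : ∀ a, f a + f (σ a) ≤ g a + g (σ a)) :
    ∑ a, f a ≤ ∑ a, g a := by
  have hsum (u : α → ℝ≥0∞) : ∑ a, (u a + u (σ a)) = 2 * ∑ a, u a := by
    rw [sum_add_distrib, Fintype.sum_bijective σ hσ.bijective (fun a => u (σ a)) u fun _ => rfl,
      two_mul]
  rw [← ENNReal.mul_le_mul_iff_right two_ne_zero ENNReal.ofNat_ne_top, ← hsum, ← hsum]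
  exact sum_le_sum fun a _ => h a

lemma ENNReal.ofReal_div_ofReal_add_one {x : ℝ} (hx : 0 ≤ x) :
    ENNReal.ofReal x / (ENNReal.ofReal x + 1) = ENNReal.ofReal (x / (x + 1)) := by
  rw [ENNReal.ofReal_div_of_pos (by positivity), ENNReal.ofReal_add hx zero_le_one,
    ENNReal.ofReal_one]

lemma ENNReal.one_add_ofReal_mul_ofReal_sub_one {p x : ℝ} (hp : 0 ≤ p) (hx : 1 ≤ x) :
    1 + ENNReal.ofReal p * (ENNReal.ofReal x - 1) = ENNReal.ofReal (1 - p + p * x) := by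
  rw [← ENNReal.ofReal_one, ← ENNReal.ofReal_sub _ zero_le_one, ← ENNReal.ofReal_mul hp,
    ← ENNReal.ofReal_add zero_le_one (mul_nonneg hp (sub_nonneg.2 hx))]
  ring_nf

namespace MeasureTheory

variable {Ω : Type*} [MeasurableSpace Ω]

lemma Measure.withDensity_mono_measure {μ ν : Measure Ω} (h : μ ≤ ν) (f : Ω → ℝ≥0∞) :
    μ.withDensity f ≤ ν.withDensity f := by
  refine Measure.le_iff.2 fun A hA => ?_
  rw [withDensity_apply _ hA, withDensity_apply _ hA]
  exact lintegral_mono' (Measure.restrict_mono subset_rfl h) le_rfl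

lemma Measure.add_apply_le_of_le_smul {μ ν : Measure Ω} {c : ℝ≥0∞} (hc : c ≠ ∞) (hμν : μ ≤ c • ν)
    (hνμ : ν ≤ c • μ) {A B : Set Ω} (hB : MeasurableSet B) (hAB : Disjoint A B) :
    μ A + ν B ≤ c / (c + 1) * (μ (A ∪ B) + ν (A ∪ B)) := by
  rw [measure_union hAB hB, measure_union hAB hB]
  calc μ A + ν B ≤ c / (c + 1) * (μ A + ν A) + c / (c + 1) * (ν B + μ B) :=
        add_le_add (ENNReal.le_div_add_one_mul_add hc (Measure.le_iff'.1 hμν A))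
          (ENNReal.le_div_add_one_mul_add hc (Measure.le_iff'.1 hνμ B))
    _ = c / (c + 1) * (μ A + μ B + (ν A + ν B)) := by ring

lemma lintegral_one_add_indicator_mul {μ : Measure Ω} {A : Set Ω} (hA : MeasurableSet A)
    (c : ℝ≥0∞) {h : Ω → ℝ≥0∞} (hh : Measurable h) :
    ∫⁻ ω, (1 + A.indicator (fun _ => c) ω) * h ω ∂μ = ∫⁻ ω, h ω ∂μ + c * μ.withDensity h A := by
  simp_rw [add_mul, one_mul, ← Set.indicator_mul_left]
  rw [lintegral_add_left hh, lintegral_indicator hA, lintegral_const_mul c hh,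
    withDensity_apply _ hA]

variable {κ : Type*} [Fintype κ] [MeasurableSpace κ] [MeasurableSingletonClass κ] {w : ℝ≥0∞}
  {M : κ → Measure Ω}

lemma lintegral_sum_smul_map_prodMk (f : κ × Ω → ℝ≥0∞) :
    ∫⁻ q, f q ∂(∑ s, w • (M s).map (fun ω => (s, ω))) = w * ∑ s, ∫⁻ ω, f (s, ω) ∂M s := by
  simp only [lintegral_finsetSum_measure, lintegral_smul_measure, smul_eq_mul,
    (measurableEmbedding_prodMk_left _).lintegral_map, mul_sum]

lemma ae_of_ae_sum_smul_map_prodMk (hw : w ≠ 0) {P : κ × Ω → Prop}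
    (h : ∀ᵐ q ∂(∑ s, w • (M s).map (fun ω => (s, ω))), P q) (s : κ) :
    ∀ᵐ ω ∂M s, P (s, ω) := by
  rw [← Measure.sum_fintype, Measure.ae_sum_iff] at h
  have hs := ae_iff.1 (h s)
  rw [Measure.smul_apply, smul_eq_mul, mul_eq_zero, or_iff_right hw] at hs
  exact (measurableEmbedding_prodMk_left s).ae_map_iff.1 (ae_iff.2 hs)

end MeasureTheory

section Chernoff

open unitInterval

variable {α : Type*} [MeasurableSpace α]

lemma one_sub_add_mul_exp_le_exp {p : ℝ} (hp : p ∈ I) (x : ℝ) :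
    1 - p + p * exp x ≤ exp (p * x + x ^ 2 / 8) := by
  let X : Bool → ℝ := fun b => if b then 1 else 0
  have hX (b : Bool) : X b ∈ Set.Icc (0 : ℝ) 1 := by cases b <;> simp [X]
  have hmgf : p * exp (x * (1 - p)) + (1 - p) * exp (-(x * p)) ≤ exp (x ^ 2 / 8) := by
    have := (ProbabilityTheory.hasSubgaussianMGF_of_mem_Icc
      (μ := ProbabilityTheory.bernoulliMeasure true false ⟨p, hp⟩)
      (measurable_of_countable X).aemeasurable (ae_of_all _ hX)).mgf_le x
    convert this using 2 <;>
      norm_num [ProbabilityTheory.mgf, ProbabilityTheory.integral_bernoulliMeasure, X]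
    ring
  have h1 : exp (p * x) * exp (x * (1 - p)) = exp x := by rw [← exp_add]; ring_nf
  have h2 : exp (p * x) * exp (-(x * p)) = 1 := by rw [← exp_add, ← exp_zero]; ring_nf
  calc 1 - p + p * exp x
      = exp (p * x) * (p * exp (x * (1 - p)) + (1 - p) * exp (-(x * p))) := by
        linear_combination (-p) * h1 - (1 - p) * h2
    _ ≤ exp (p * x) * exp (x ^ 2 / 8) := by gcongr
    _ = exp (p * x + x ^ 2 / 8) := (exp_add _ _).symm

lemma ofReal_exp_mul_measure_le_lintegral {μ : Measure α} {X : α → ℝ} (hX : AEMeasurable X μ)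
    {L : ℝ} (hL : 0 ≤ L) (a : ℝ) :
    ENNReal.ofReal (exp (L * a)) * μ {x | a ≤ X x} ≤ ∫⁻ x, ENNReal.ofReal (exp (L * X x)) ∂μ := by
  refine le_trans ?_ (mul_meas_ge_le_lintegral₀ (by fun_prop) (ENNReal.ofReal (exp (L * a))))
  refine mul_le_mul_right (measure_mono fun x (hx : a ≤ X x) => ?_) _
  exact ENNReal.ofReal_le_ofReal (exp_le_exp.2 (mul_le_mul_of_nonneg_left hx hL))

theorem measure_ge_le_of_lintegral_exp_le_binomial {μ : Measure α} {X : α → ℝ}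
    (hX : AEMeasurable X μ) {p : ℝ} (hp : p ∈ I) {r : ℕ}
    (hmgf : ∀ L, 0 ≤ L → ∫⁻ x, ENNReal.ofReal (exp (L * X x)) ∂μ ≤
      ENNReal.ofReal (1 - p + p * exp L) ^ r) {t : ℝ} (ht : 0 ≤ t) :
    μ {x | r * p + t ≤ X x} ≤ ENNReal.ofReal (exp (-2 * t ^ 2 / r)) := by
  -- `L = 4t/r` minimises the Chernoff exponent `r (p L + L²/8) - L (r p + t)`.
  set L := 4 * t / r
  have hL : 0 ≤ L := by positivity
  have hexponent : r * (p * L + L ^ 2 / 8) = L * (r * p + t) + -2 * t ^ 2 / r := by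
    rcases eq_or_ne (r : ℝ) 0 with hr | hr
    · simp [L, hr]
    · simp only [L]; field_simp; ring
  rw [← ENNReal.mul_le_mul_iff_right (a := ENNReal.ofReal (exp (L * (r * p + t))))
    (by positivity) ENNReal.ofReal_ne_top]
  calc ENNReal.ofReal (exp (L * (r * p + t))) * μ {x | r * p + t ≤ X x}
      ≤ ENNReal.ofReal (1 - p + p * exp L) ^ r :=
        (ofReal_exp_mul_measure_le_lintegral hX hL _).trans (hmgf L hL)
    _ ≤ ENNReal.ofReal (exp (p * L + L ^ 2 / 8)) ^ r := by
        gcongr; exact one_sub_add_mul_exp_le_exp hp L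
    _ = ENNReal.ofReal (exp (L * (r * p + t))) * ENNReal.ofReal (exp (-2 * t ^ 2 / r)) := by
        rw [← ENNReal.ofReal_pow (exp_pos _).le, ← exp_nat_mul, hexponent, exp_add,
          ENNReal.ofReal_mul (exp_pos _).le]

end Chernoff

section flipAt

variable {ι : Type*} [DecidableEq ι]

def flipAt (a : ι) (s : ι → Bool) : ι → Bool := Function.update s a (!s a)

@[simp]
lemma flipAt_apply_self (a : ι) (s : ι → Bool) : flipAt a s a = !s a := by
  simp [flipAt]

lemma flipAt_apply_of_ne {a i : ι} (h : i ≠ a) (s : ι → Bool) : flipAt a s i = s i :=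
  Function.update_of_ne h _ _

lemma flipAt_involutive (a : ι) : Function.Involutive (flipAt a) := by
  intro s
  ext i
  rcases eq_or_ne i a with rfl | h
  · simp
  · rw [flipAt_apply_of_ne h, flipAt_apply_of_ne h]

lemma card_filter_ne_flipAt [Fintype ι] (a : ι) (s : ι → Bool) :
    #{i | s i ≠ flipAt a s i} = 1 := by
  rw [card_eq_one]
  refine ⟨a, ext fun i => ?_⟩
  rcases eq_or_ne i a with rfl | h
  · simp
  · simp [h, flipAt_apply_of_ne h]

end flipAt

section Mechanism

variable {ι Ω : Type*} [Fintype ι] [MeasurableSpace Ω]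

def IsPureDP (ε : ℝ) (M : (ι → Bool) → Measure Ω) : Prop :=
  ∀ s s' : ι → Bool, #{i | s i ≠ s' i} = 1 →
    ∀ A : Set Ω, MeasurableSet A → M s A ≤ ENNReal.ofReal (exp ε) * M s' A

variable [DecidableEq ι] {ε : ℝ} {M : (ι → Bool) → Measure Ω}

lemma IsPureDP.le_smul_flipAt (hM : IsPureDP ε M) (a : ι) (s : ι → Bool) :
    M s ≤ ENNReal.ofReal (exp ε) • M (flipAt a s) :=
  Measure.le_iff.2 fun A hA => hM s _ (card_filter_ne_flipAt a s) A hA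

lemma sum_apply_le_of_le_smul_flipAt {ν : (ι → Bool) → Measure Ω} {c : ℝ≥0∞} (hc : c ≠ ∞)
    {a : ι} (hν : ∀ s, ν s ≤ c • ν (flipAt a s)) {E : Bool → Set Ω}
    (hE : ∀ b, MeasurableSet (E b)) (hdisj : Disjoint (E true) (E false)) :
    ∑ s, ν s (E (s a)) ≤ ∑ s, c / (c + 1) * ν s (E true ∪ E false) := by
  refine ENNReal.sum_le_sum_of_involutive (flipAt_involutive a) fun s => ?_
  have hν' : ν (flipAt a s) ≤ c • ν s := by
    simpa only [flipAt_involutive a s] using hν (flipAt a s)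
  obtain ⟨hunion, hdisj'⟩ :
      E (s a) ∪ E (!s a) = E true ∪ E false ∧ Disjoint (E (s a)) (E (!s a)) := by
    cases s a
    exacts [⟨Set.union_comm _ _, hdisj.symm⟩, ⟨rfl, hdisj⟩]
  rw [flipAt_apply_self, ← mul_add, ← hunion]
  exact Measure.add_apply_le_of_le_smul hc (hν s) hν' (hE _) hdisj'

lemma IsPureDP.sum_lintegral_one_add_indicator_mul_le (hM : IsPureDP ε M) (a : ι)
    {E : Bool → Set Ω} (hE : ∀ b, MeasurableSet (E b)) (hdisj : Disjoint (E true) (E false))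
    (c : ℝ≥0∞) {H : (ι → Bool) → Ω → ℝ≥0∞} (hH : ∀ s, Measurable (H s))
    (hHflip : ∀ s, H (flipAt a s) = H s) :
    ∑ s, ∫⁻ ω, (1 + (E (s a)).indicator (fun _ => c) ω) * H s ω ∂M s ≤
      ∑ s, ∫⁻ ω, (1 + (E true ∪ E false).indicator
        (fun _ => ENNReal.ofReal (exp ε / (exp ε + 1)) * c) ω) * H s ω ∂M s := by
  simp_rw [lintegral_one_add_indicator_mul (hE _) _ (hH _),
    lintegral_one_add_indicator_mul ((hE true).union (hE false)) _ (hH _), sum_add_distrib]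
  refine add_le_add le_rfl ?_
  have hν (s : ι → Bool) : (M s).withDensity (H s) ≤
      ENNReal.ofReal (exp ε) • (M (flipAt a s)).withDensity (H (flipAt a s)) := by
    rw [hHflip, ← withDensity_smul_measure]
    exact Measure.withDensity_mono_measure (hM.le_smul_flipAt a s) _
  calc ∑ s, c * (M s).withDensity (H s) (E (s a))
      ≤ c * ∑ s, ENNReal.ofReal (exp ε) / (ENNReal.ofReal (exp ε) + 1) *
          (M s).withDensity (H s) (E true ∪ E false) := by
        rw [← mul_sum]
        exact mul_le_mul_right (sum_apply_le_of_le_smul_flipAt ENNReal.ofReal_ne_top hν hE hdisj) c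
    _ = _ := by
        simp_rw [mul_sum, ENNReal.ofReal_div_ofReal_add_one (exp_pos ε).le, mul_assoc,
          mul_left_comm c]

theorem IsPureDP.sum_lintegral_prod_one_add_indicator_le (hM : IsPureDP ε M)
    {E : ι → Bool → Set Ω} (hE : ∀ i b, MeasurableSet (E i b))
    (hdisj : ∀ i, Disjoint (E i true) (E i false)) (c : ℝ≥0∞) :
    ∑ s, ∫⁻ ω, ∏ i, (1 + (E i (s i)).indicator (fun _ => c) ω) ∂M s ≤
      ∑ s, ∫⁻ ω, ∏ i, (1 + (E i true ∪ E i false).indicator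
        (fun _ => ENNReal.ofReal (exp ε / (exp ε + 1)) * c) ω) ∂M s := by
  set φ : (ι → Bool) → ι → Ω → ℝ≥0∞ := fun s i ω => 1 + (E i (s i)).indicator (fun _ => c) ω
  set ψ : ι → Ω → ℝ≥0∞ := fun i ω => 1 + (E i true ∪ E i false).indicator
    (fun _ => ENNReal.ofReal (exp ε / (exp ε + 1)) * c) ω
  have hφ (s i) : Measurable (φ s i) :=
    (measurable_const.indicator (hE i (s i))).const_add 1
  have hψ (i) : Measurable (ψ i) :=
    (measurable_const.indicator ((hE i true).union (hE i false))).const_add 1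
  suffices ∀ T : Finset ι,
      ∑ s, ∫⁻ ω, (∏ i ∈ T, φ s i ω) * ∏ i ∈ Tᶜ, ψ i ω ∂M s ≤ ∑ s, ∫⁻ ω, ∏ i, ψ i ω ∂M s by
    simpa using this univ
  intro T
  induction T using Finset.induction_on with
  | empty => simp
  | @insert a T haT ih =>
    let H : (ι → Bool) → Ω → ℝ≥0∞ := fun s ω => (∏ i ∈ T, φ s i ω) * ∏ i ∈ (insert a T)ᶜ, ψ i ω
    have hH (s) : Measurable (H s) :=
      (Finset.measurable_prod _ fun i _ => hφ s i).mul (Finset.measurable_prod _ fun i _ => hψ i)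
    have hHflip (s) : H (flipAt a s) = H s := by
      funext ω
      refine congrArg (· * _) (prod_congr rfl fun i hi => ?_)
      simp only [φ, flipAt_apply_of_ne (ne_of_mem_of_not_mem hi haT)]
    calc ∑ s, ∫⁻ ω, (∏ i ∈ insert a T, φ s i ω) * ∏ i ∈ (insert a T)ᶜ, ψ i ω ∂M s
        = ∑ s, ∫⁻ ω, φ s a ω * H s ω ∂M s := by simp only [prod_insert haT, mul_assoc, H]
      _ ≤ ∑ s, ∫⁻ ω, ψ a ω * H s ω ∂M s :=
        hM.sum_lintegral_one_add_indicator_mul_le a (hE a) (hdisj a) c hH hHflip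
      _ = ∑ s, ∫⁻ ω, (∏ i ∈ T, φ s i ω) * ∏ i ∈ Tᶜ, ψ i ω ∂M s := by
        refine sum_congr rfl fun s _ => lintegral_congr fun ω => ?_
        rw [mul_left_comm, compl_insert, mul_prod_erase _ (fun i => ψ i ω) (mem_compl.2 haT)]
      _ ≤ _ := ih

end Mechanism

section Audit

variable {ι Ω : Type*} [Fintype ι] [MeasurableSpace Ω]

def numCorrect (g : ι → ℤ) (s : ι → Bool) : ℤ := ∑ i, max 0 (g i * signOf (s i))

lemma max_zero_mul_signOf {z : ℤ} (hz : z = -1 ∨ z = 0 ∨ z = 1) (b : Bool) :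
    max 0 (z * signOf b) = if z = signOf b then 1 else 0 := by
  rcases hz with rfl | rfl | rfl <;> cases b <;> decide

lemma eq_signOf_true_or_eq_signOf_false_iff {z : ℤ} (hz : z = -1 ∨ z = 0 ∨ z = 1) :
    z = signOf true ∨ z = signOf false ↔ z ≠ 0 := by
  rcases hz with rfl | rfl | rfl <;> decide

lemma numCorrect_eq_card {g : ι → ℤ} (hg : ∀ i, g i = -1 ∨ g i = 0 ∨ g i = 1) (s : ι → Bool) :
    numCorrect g s = #{i | g i = signOf (s i)} := by
  simp only [numCorrect, max_zero_mul_signOf (hg _), sum_boole]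

lemma prod_one_add_ite {R : Type*} [CommSemiring R] (P : ι → Prop) [DecidablePred P] (c : R) :
    ∏ i, (1 + if P i then c else 0) = (1 + c) ^ #{i | P i} := by
  simp only [add_ite, add_zero, prod_ite, prod_const, one_pow, mul_one]

theorem IsPureDP.sum_lintegral_exp_numCorrect_le [DecidableEq ι] {ε : ℝ}
    {M : (ι → Bool) → Measure Ω} [∀ s, IsProbabilityMeasure (M s)] (hM : IsPureDP ε M)
    {Sg : Ω → ι → ℤ} (hSg : Measurable Sg)
    (hvals : ∀ ω i, Sg ω i = -1 ∨ Sg ω i = 0 ∨ Sg ω i = 1) {r : ℕ}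
    (hr : ∀ s, ∀ᵐ ω ∂M s, #{i | Sg ω i ≠ 0} = r) {L : ℝ} (hL : 0 ≤ L) :
    ∑ s, ∫⁻ ω, ENNReal.ofReal (exp (L * numCorrect (Sg ω) s)) ∂M s ≤
      ∑ _s : ι → Bool,
        ENNReal.ofReal (1 - exp ε / (exp ε + 1) + exp ε / (exp ε + 1) * exp L) ^ r := by
  set p := exp ε / (exp ε + 1)
  let E : ι → Bool → Set Ω := fun i b => {ω | Sg ω i = signOf b}
  have hE (i b) : MeasurableSet (E i b) :=
    (measurable_pi_apply i).comp hSg (measurableSet_singleton _)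
  have hdisj (i) : Disjoint (E i true) (E i false) :=
    Set.disjoint_left.2 fun ω h1 h2 => by simp_all [E, signOf]
  set c := ENNReal.ofReal (exp L) - 1
  have hc : 1 + c = ENNReal.ofReal (exp L) :=
    add_tsub_cancel_of_le (ENNReal.one_le_ofReal.2 (one_le_exp hL))
  calc ∑ s, ∫⁻ ω, ENNReal.ofReal (exp (L * numCorrect (Sg ω) s)) ∂M s
      = ∑ s, ∫⁻ ω, ∏ i, (1 + (E i (s i)).indicator (fun _ => c) ω) ∂M s := by
        simp only [Set.indicator_apply, E, Set.mem_ofPred_eq, prod_one_add_ite, hc,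
          numCorrect_eq_card (hvals _), Int.cast_natCast, exp_nat_mul, ENNReal.ofReal_pow
          (exp_pos _).le, mul_comm L]
    _ ≤ ∑ s, ∫⁻ ω, ∏ i, (1 + (E i true ∪ E i false).indicator
          (fun _ => ENNReal.ofReal p * c) ω) ∂M s :=
        hM.sum_lintegral_prod_one_add_indicator_le hE hdisj c
    _ = ∑ _s : ι → Bool, ENNReal.ofReal (1 - p + p * exp L) ^ r := by
        refine sum_congr rfl fun s _ => ?_
        have hD : 1 + ENNReal.ofReal p * c = ENNReal.ofReal (1 - p + p * exp L) :=
          ENNReal.one_add_ofReal_mul_ofReal_sub_one (by positivity) (one_le_exp hL)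
        calc _ = ∫⁻ _, ENNReal.ofReal (1 - p + p * exp L) ^ r ∂M s := by
              refine lintegral_congr_ae ((hr s).mono fun ω hω => ?_)
              simp only [Set.indicator_apply, E, Set.mem_union, Set.mem_ofPred_eq,
                eq_signOf_true_or_eq_signOf_false_iff (hvals _ _), prod_one_add_ite, hω, hD]
          _ = _ := by simp

end Audit

theorem o1_audit_hoeffding_general
    {Ω : Type*} [MeasurableSpace Ω]
    (ε : ℝ) (m r : ℕ)
    (M : (Fin m → Bool) → Measure Ω)
    (hMprob : ∀ s, IsProbabilityMeasure (M s))
    (hDP : ∀ s s' : Fin m → Bool,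
      (Finset.univ.filter (fun i => s i ≠ s' i)).card = 1 →
      ∀ A : Set Ω, MeasurableSet A →
        M s A ≤ ENNReal.ofReal (Real.exp ε) * M s' A)
    (P : Measure ((Fin m → Bool) × Ω))
    (hP : P = ∑ s : Fin m → Bool,
      ((2 : ℝ≥0∞) ^ m)⁻¹ • (M s).map (fun ω => (s, ω)))
    (Sg : Ω → Fin m → ℤ) (hSg : Measurable Sg)
    (hvals : ∀ ω i, Sg ω i = -1 ∨ Sg ω i = 0 ∨ Sg ω i = 1)
    (hguesses : ∀ᵐ q ∂P, (Finset.univ.filter (fun i => Sg q.2 i ≠ 0)).card = r)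
    (t : ℝ) (ht : 0 < t) :
    P {q : (Fin m → Bool) × Ω |
        (r : ℝ) * (Real.exp ε / (Real.exp ε + 1)) + t ≤
          ((∑ i, max 0 (Sg q.2 i * signOf (q.1 i)) : ℤ) : ℝ)} ≤
      ENNReal.ofReal (Real.exp (-2 * t ^ 2 / r)) := by
  have hp : exp ε / (exp ε + 1) ∈ unitInterval :=
    ⟨by positivity, (div_le_one (by positivity)).2 (by linarith)⟩
  have hw : ((2 : ℝ≥0∞) ^ m)⁻¹ ≠ 0 := by simp
  have hr := ae_of_ae_sum_smul_map_prodMk hw (hP ▸ hguesses)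
  have hX : Measurable fun q : (Fin m → Bool) × Ω => (numCorrect (Sg q.2) q.1 : ℝ) := by
    fun_prop
  refine measure_ge_le_of_lintegral_exp_le_binomial (μ := P) (r := r) hX.aemeasurable hp
    (fun L hL => ?_) ht.le
  rw [hP, lintegral_sum_smul_map_prodMk]
  calc _ ≤ ((2 : ℝ≥0∞) ^ m)⁻¹ * ∑ _s : Fin m → Bool,
        ENNReal.ofReal (1 - exp ε / (exp ε + 1) + exp ε / (exp ε + 1) * exp L) ^ r :=
        mul_le_mul_right (IsPureDP.sum_lintegral_exp_numCorrect_le hDP hSg hvals hr hL) _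
    _ = _ := by
        rw [sum_const, card_univ, Fintype.card_fun, Fintype.card_bool, Fintype.card_fin,
          nsmul_eq_mul, Nat.cast_pow, Nat.cast_ofNat, ← mul_assoc,
          ENNReal.inv_mul_cancel (by simp) (by simp), one_mul]

/-- for an (ε,0)-DP mechanism M on membership vectors S ∈ {−1,+1}^m with
i.i.d. fair-sign coordinates and a measurable guessing rule with values in {−1,0,+1}^m
making exactly r nonzero guesses a.s., the number of correct guesses W satisfies the
Hoeffding-type bound Pr[W ≥ r·e^ε/(e^ε+1) + t] ≤ exp(−2t²/r) for every t > 0. -/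
theorem o1_audit_hoeffding
    {Ω : Type*} [MeasurableSpace Ω]
    (ε : ℝ) (hε : 0 ≤ ε) (m r : ℕ) (hrm : r ≤ m)
    (M : (Fin m → Bool) → Measure Ω)
    (hMprob : ∀ s, IsProbabilityMeasure (M s))
    (hDP : ∀ s s' : Fin m → Bool,
      (Finset.univ.filter (fun i => s i ≠ s' i)).card = 1 →
      ∀ A : Set Ω, MeasurableSet A →
        M s A ≤ ENNReal.ofReal (Real.exp ε) * M s' A)
    (P : Measure ((Fin m → Bool) × Ω))
    (hP : P = ∑ s : Fin m → Bool,
      ((2 : ℝ≥0∞) ^ m)⁻¹ • (M s).map (fun ω => (s, ω)))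
    (Sg : Ω → Fin m → ℤ) (hSg : Measurable Sg)
    (hvals : ∀ ω i, Sg ω i = -1 ∨ Sg ω i = 0 ∨ Sg ω i = 1)
    (hguesses : ∀ᵐ q ∂P, (Finset.univ.filter (fun i => Sg q.2 i ≠ 0)).card = r)
    (t : ℝ) (ht : 0 < t) :
    P {q : (Fin m → Bool) × Ω |
        (r : ℝ) * (Real.exp ε / (Real.exp ε + 1)) + t ≤
          ((∑ i, max 0 (Sg q.2 i * signOf (q.1 i)) : ℤ) : ℝ)} ≤
      ENNReal.ofReal (Real.exp (-2 * t ^ 2 / r)) :=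
  o1_audit_hoeffding_general ε m r M hMprob hDP P hP Sg hSg hvals hguesses t ht
end
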